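/- Let n be a natural number and let g be any bijection between Fin n → Bool and Fin (2^n) such that for all vertices x, y, the reflexive-transitive closure of the twisted-cube edge relation T_n relates x to y iff g x ≤ g y. Then for every vertex v : Fin n → Bool, the number of outgoing non-loop edges at v (i.e., the number of vertices w ≠ v with T_n v w) equals the number of zeros in the n-digit binary representation of the order number of v, i.e., the number of indices i < n such that the i-th binary digit of the natural number (g v : ℕ) is 0. -/

import Mathlib

/-
The map `x ↦ (x i xor [the number of zeros of x below i is odd])_i` is a bijection of the
cube; read as a binary number with coordinate `0` most significant, it gives the rank of `x`.
An edge out of `x` in direction `i` exists exactly when digit `i` of the rank is `0`, and it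
sets that digit, keeps the more significant ones and complements the less significant ones.
So every edge increases the rank, flipping at the least significant `0` digit increases it by
exactly one, and the reachability order is the order of ranks. An order isomorphism onto
`Fin (2 ^ n)` is unique, so `g` is the rank, and the out-degree of `v` is the number of `0`
digits of `g v`.
-/

/-- Edge relation of the twisted n-cube. -/
def TwE (n : ℕ) (x y : Fin n → Bool) : Prop :=
  x = y ∨ ∃ i : Fin n, (∀ j, j ≠ i → x j = y j) ∧ y i = !(x i) ∧
    (x i = true ↔ Odd (Finset.univ.filter (fun j : Fin n => j < i ∧ x j = false)).card)

namespace Nat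

theorem testBit_add_one_eq_xor {a K : ℕ} (hK : a.testBit K = false)
    (hlow : ∀ k < K, a.testBit k = true) (k : ℕ) :
    (a + 1).testBit k = (a.testBit k ^^ decide (k ≤ K)) := by
  induction K generalizing a k with
  | zero =>
    have ha : a % 2 = 0 := by simpa [testBit_zero] using hK
    cases k with
    | zero => simp [testBit_zero, add_mod, ha]
    | succ k =>
      rw [testBit_add_one, testBit_add_one, show (a + 1) / 2 = a / 2 by omega]
      simp
  | succ K ih =>
    have ha : a % 2 = 1 := by simpa [testBit_zero] using hlow 0 K.succ_pos
    cases k with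
    | zero => simp [testBit_zero, add_mod, ha]
    | succ k =>
      have hdiv : (a + 1) / 2 = a / 2 + 1 := by omega
      have hK' : (a / 2).testBit K = false := by rwa [testBit_div_two]
      have hlow' : ∀ j < K, (a / 2).testBit j = true := fun j hj => by
        rw [testBit_div_two]
        exact hlow _ (by omega)
      rw [testBit_add_one, testBit_add_one, hdiv, ih hK' hlow']
      simp

end Nat

theorem Equiv.eq_of_le_iff_le {α β : Type*} [LinearOrder β] [WellFoundedLT β] (e f : α ≃ β)
    (h : ∀ x y, e x ≤ e y ↔ f x ≤ f y) : e = f := by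
  let o : β ≃o β := ⟨e.symm.trans f, fun {a b} => by simpa using (h (e.symm a) (e.symm b)).symm⟩
  ext x
  simpa [o] using (congrArg (· (e x)) (Subsingleton.elim o (OrderIso.refl β))).symm

namespace TwistedCube

variable {n : ℕ}

def zerosBelow (x : Fin n → Bool) (i : Fin n) : ℕ :=
  (Finset.univ.filter fun j : Fin n => j < i ∧ x j = false).card

def twistedBit (x : Fin n → Bool) (i : Fin n) : Bool :=
  x i ^^ decide (Odd (zerosBelow x i))

def flipAt (x : Fin n → Bool) (i : Fin n) : Fin n → Bool :=
  Function.update x i (!x i)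

theorem twistedBit_eq_false_iff {x : Fin n → Bool} {i : Fin n} :
    twistedBit x i = false ↔ (x i = true ↔ Odd (zerosBelow x i)) := by
  cases hx : x i <;> simp [twistedBit, hx]

theorem twE_iff {x y : Fin n → Bool} :
    TwE n x y ↔ x = y ∨ ∃ i, twistedBit x i = false ∧ flipAt x i = y := by
  refine or_congr Iff.rfl (exists_congr fun i => ?_)
  rw [twistedBit_eq_false_iff, flipAt, Function.update_eq_iff, eq_comm (a := !x i)]
  tauto

theorem zerosBelow_congr {x y : Fin n → Bool} {i : Fin n} (h : ∀ j < i, x j = y j) :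
    zerosBelow x i = zerosBelow y i :=
  congrArg Finset.card <| Finset.filter_congr fun j _ => and_congr_right fun hj => by rw [h j hj]

theorem twistedBit_injective : Function.Injective (twistedBit (n := n)) := by
  intro x y h
  funext i
  induction i using WellFoundedLT.induction with
  | _ i ih =>
    have := congrFun h i
    rwa [twistedBit, twistedBit, zerosBelow_congr ih, Bool.xor_left_inj] at this

@[simp]
theorem flipAt_self (x : Fin n → Bool) (i : Fin n) : flipAt x i i = !x i :=
  Function.update_self _ _ _

@[simp]
theorem flipAt_of_ne (x : Fin n → Bool) {i j : Fin n} (h : j ≠ i) : flipAt x i j = x j :=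
  Function.update_of_ne h _ _

theorem flipAt_flipAt (x : Fin n → Bool) (i : Fin n) : flipAt (flipAt x i) i = x := by
  simp [flipAt]

theorem flipAt_ne (x : Fin n → Bool) (i : Fin n) : flipAt x i ≠ x := fun h => by
  simpa using congrFun h i

theorem flipAt_injective (x : Fin n → Bool) : Function.Injective (flipAt x) := by
  intro i j h
  by_contra hij
  simpa [hij] using congrFun h i

theorem zerosBelow_flipAt_of_le {x : Fin n → Bool} {i j : Fin n} (hji : j ≤ i) :
    zerosBelow (flipAt x i) j = zerosBelow x j :=
  zerosBelow_congr fun _ hk => Function.update_of_ne (hk.trans_le hji).ne _ _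

theorem zerosBelow_flipAt_of_lt {x : Fin n → Bool} {i j : Fin n} (hx : x i = true) (hij : i < j) :
    zerosBelow (flipAt x i) j = zerosBelow x j + 1 := by
  have hset : (Finset.univ.filter fun k => k < j ∧ flipAt x i k = false) =
      insert i (Finset.univ.filter fun k => k < j ∧ x k = false) := by
    ext k
    rcases eq_or_ne k i with rfl | hk
    · simp [hx, hij]
    · simp [hk]
  rw [zerosBelow, hset, Finset.card_insert_of_notMem (by simp [hx])]
  rfl

theorem odd_zerosBelow_flipAt {x : Fin n → Bool} {i j : Fin n} (hij : i < j) :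
    Odd (zerosBelow (flipAt x i) j) ↔ ¬Odd (zerosBelow x j) := by
  cases hx : x i
  · have hy : zerosBelow x j = zerosBelow (flipAt x i) j + 1 := by
      simpa [flipAt_flipAt] using zerosBelow_flipAt_of_lt (x := flipAt x i) (by simp [hx]) hij
    rw [hy, Nat.odd_add_one, not_not]
  · rw [zerosBelow_flipAt_of_lt hx hij, Nat.odd_add_one]

theorem twistedBit_flipAt (x : Fin n → Bool) (i j : Fin n) :
    twistedBit (flipAt x i) j = (twistedBit x j ^^ decide (i ≤ j)) := by
  rcases lt_trichotomy j i with h | rfl | h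
  · simp [twistedBit, h.ne, zerosBelow_flipAt_of_le h.le, not_le.2 h]
  · simp [twistedBit, zerosBelow_flipAt_of_le le_rfl]
  · simp only [twistedBit, flipAt_of_ne _ h.ne', odd_zerosBelow_flipAt h, decide_not,
      Bool.xor_not, decide_eq_true h.le, Bool.xor_true]

def rank (x : Fin n → Bool) : Fin (2 ^ n) :=
  Fin.ofBits fun k => twistedBit x k.rev

theorem testBit_rank (x : Fin n → Bool) (k : Fin n) :
    (rank x : ℕ).testBit k = twistedBit x k.rev :=
  Nat.testBit_ofBits_lt _ _ k.isLt

theorem rank_injective : Function.Injective (rank (n := n)) := by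
  intro x y h
  apply twistedBit_injective
  funext i
  rw [← Fin.rev_rev i, ← testBit_rank, ← testBit_rank, h]

theorem rank_bijective : Function.Bijective (rank (n := n)) :=
  (Fintype.bijective_iff_injective_and_card _).2 ⟨rank_injective, by simp⟩

theorem rank_lt_rank_flipAt {x : Fin n → Bool} {i : Fin n} (h : twistedBit x i = false) :
    rank x < rank (flipAt x i) := by
  rw [Fin.lt_def]
  refine Nat.lt_of_testBit i.rev ?_ ?_ fun j hj => ?_
  · rw [testBit_rank, Fin.rev_rev, h]
  · rw [testBit_rank, Fin.rev_rev, twistedBit_flipAt, h]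
    simp
  · by_cases hjn : j < n
    · have hij : ¬i ≤ (⟨j, hjn⟩ : Fin n).rev := not_le.2 (Fin.rev_lt_iff.1 hj)
      rw [show j = ((⟨j, hjn⟩ : Fin n) : ℕ) from rfl, testBit_rank, testBit_rank,
        twistedBit_flipAt, decide_eq_false hij, Bool.xor_false]
    · simp [rank, Nat.testBit_ofBits_ge _ _ (not_lt.1 hjn)]

theorem rank_le_of_twE {x y : Fin n → Bool} (h : TwE n x y) : rank x ≤ rank y := by
  rcases twE_iff.1 h with rfl | ⟨i, hi, rfl⟩
  · exact le_rfl
  · exact (rank_lt_rank_flipAt hi).le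

theorem exists_twE_rank_eq_add_one {x : Fin n → Bool} (h : (rank x : ℕ) + 1 < 2 ^ n) :
    ∃ y, TwE n x y ∧ (rank y : ℕ) = rank x + 1 := by
  set a : ℕ := (rank x : ℕ)
  have hex : ∃ K, a.testBit K = false := ⟨n, Nat.testBit_lt_two_pow (rank x).isLt⟩
  set K := Nat.find hex
  have hK : a.testBit K = false := Nat.find_spec hex
  have hlow : ∀ k < K, a.testBit k = true := fun k hk => by simpa using Nat.find_min hex hk
  have hsucc := Nat.testBit_add_one_eq_xor hK hlow
  have hKn : K < n := by
    have := Nat.ge_two_pow_of_testBit (x := a + 1) (i := K) (by simp [hsucc, hK])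
    exact (Nat.pow_lt_pow_iff_right (a := 2) (by norm_num)).1 (by omega)
  let i : Fin n := (⟨K, hKn⟩ : Fin n).rev
  refine ⟨flipAt x i, twE_iff.2 (.inr ⟨i, (testBit_rank x ⟨K, hKn⟩).symm.trans hK, rfl⟩), ?_⟩
  calc (rank (flipAt x i) : ℕ) = Nat.ofBits fun k : Fin n => (a + 1).testBit k := by
        refine congrArg Nat.ofBits (funext fun k => ?_)
        rw [twistedBit_flipAt, hsucc, show a.testBit k = twistedBit x k.rev from testBit_rank x k]
        simp only [i, Fin.rev_le_rev]
        rfl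
    _ = a + 1 := by rw [Nat.ofBits_testBit, Nat.mod_eq_of_lt h]

theorem reflTransGen_twE_of_rank_le {x y : Fin n → Bool} (h : rank x ≤ rank y) :
    Relation.ReflTransGen (TwE n) x y := by
  obtain ⟨d, hd⟩ := Nat.exists_eq_add_of_le (Fin.le_def.1 h)
  induction d generalizing x with
  | zero => rw [rank_injective (Fin.ext hd.symm)]
  | succ d ih =>
    have hy := (rank y).isLt
    obtain ⟨z, hxz, hz⟩ := exists_twE_rank_eq_add_one (x := x) (by omega)
    exact .head hxz (ih (Fin.le_def.2 (by omega)) (by omega))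

theorem reflTransGen_twE_iff {x y : Fin n → Bool} :
    Relation.ReflTransGen (TwE n) x y ↔ rank x ≤ rank y := by
  refine ⟨fun h => ?_, reflTransGen_twE_of_rank_le⟩
  induction h with
  | refl => exact le_rfl
  | tail _ hyz ih => exact ih.trans (rank_le_of_twE hyz)

theorem setOf_ne_and_twE (v : Fin n → Bool) :
    {w | w ≠ v ∧ TwE n v w} = flipAt v '' {i | twistedBit v i = false} := by
  ext w
  simp only [Set.mem_ofPred_eq, Set.mem_image, twE_iff]
  constructor
  · rintro ⟨hne, rfl | h⟩
    · exact absurd rfl hne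
    · exact h
  · rintro ⟨i, hi, rfl⟩
    exact ⟨flipAt_ne v i, .inr ⟨i, hi, rfl⟩⟩

theorem ncard_testBit_rank_eq_false (v : Fin n → Bool) :
    {k : Fin n | (rank v : ℕ).testBit k = false}.ncard = {i | twistedBit v i = false}.ncard := by
  simp_rw [testBit_rank]
  exact Set.ncard_preimage_of_injective_subset_range (s := {i | twistedBit v i = false})
    Fin.rev_injective (by simp [Fin.rev_surjective.range_eq])

end TwistedCube

theorem stmt16 (n : ℕ) (g : (Fin n → Bool) ≃ Fin (2 ^ n))
    (hg : ∀ x y : Fin n → Bool,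
      Relation.ReflTransGen (TwE n) x y ↔ g x ≤ g y)
    (v : Fin n → Bool) :
    {w : Fin n → Bool | w ≠ v ∧ TwE n v w}.ncard =
      {i : Fin n | Nat.testBit (g v : ℕ) (i : ℕ) = false}.ncard := by
  have hg_rank : g = Equiv.ofBijective TwistedCube.rank TwistedCube.rank_bijective :=
    Equiv.eq_of_le_iff_le _ _ fun x y => (hg x y).symm.trans TwistedCube.reflTransGen_twE_iff
  rw [TwistedCube.setOf_ne_and_twE,
    Set.ncard_image_of_injective _ (TwistedCube.flipAt_injective v), hg_rank,
    Equiv.ofBijective_apply, TwistedCube.ncard_testBit_rank_eq_false]
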